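/- Let G₁ and G₂ be simple connected graphs with n₂ = |V(G₂)| vertices in G₂ and m₁ = |E(G₁)|, m₂ = |E(G₂)| edges. Then the F-index of the edge T-join satisfies F(G₁ ∨̱_T G₂) = 8F(G₁) + F(G₂) + 3n₂²M₁(G₁) + 3m₁M₁(G₂) + M₄(G₁) + 3n₂HM(G₁) + 3ReZM(G₁) + m₁²(6m₂ + m₁n₂) + m₁n₂³. -/

import Mathlib

/-- The subdivision graph `S(G)`: a new vertex is inserted into each edge of `G`
(each edge is replaced by a path of length 2). The inserted vertices form the
right summand `↥G.edgeSet`. -/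
def Sgraph {V : Type*} (G : SimpleGraph V) : SimpleGraph (V ⊕ ↥G.edgeSet) where
  Adj x y :=
    match x, y with
    | Sum.inl v, Sum.inr e => v ∈ (e : Sym2 V)
    | Sum.inr e, Sum.inl v => v ∈ (e : Sym2 V)
    | _, _ => False
  symm := by constructor; rintro (v | e) (w | f) h <;> exact h
  loopless := by constructor; rintro (v | e) h <;> exact h

/-- The graph `R(G)`: obtained from `G` by inserting a new vertex into each edge of `G`
and joining each new vertex to the end vertices of its corresponding edge. -/
def Rgraph {V : Type*} (G : SimpleGraph V) : SimpleGraph (V ⊕ ↥G.edgeSet) where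
  Adj x y :=
    match x, y with
    | Sum.inl v, Sum.inl w => G.Adj v w
    | Sum.inl v, Sum.inr e => v ∈ (e : Sym2 V)
    | Sum.inr e, Sum.inl v => v ∈ (e : Sym2 V)
    | Sum.inr _, Sum.inr _ => False
  symm := by
    constructor; rintro (v | e) (w | f) h
    · exact G.adj_symm h
    · exact h
    · exact h
    · exact h
  loopless := by
    constructor; rintro (v | e) h
    · exact G.irrefl h
    · exact h

/-- The graph `Q(G)`: obtained from `G` by inserting a new vertex into each edge of `G`,
then joining by edges those pairs of new vertices lying on adjacent edges of `G`. -/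
def Qgraph {V : Type*} (G : SimpleGraph V) : SimpleGraph (V ⊕ ↥G.edgeSet) where
  Adj x y :=
    match x, y with
    | Sum.inl _, Sum.inl _ => False
    | Sum.inl v, Sum.inr e => v ∈ (e : Sym2 V)
    | Sum.inr e, Sum.inl v => v ∈ (e : Sym2 V)
    | Sum.inr e, Sum.inr f => e ≠ f ∧ ∃ v, v ∈ (e : Sym2 V) ∧ v ∈ (f : Sym2 V)
  symm := by
    constructor; rintro (v | e) (w | f) h
    · exact h
    · exact h
    · exact h
    · exact ⟨h.1.symm, by obtain ⟨v, h1, h2⟩ := h.2; exact ⟨v, h2, h1⟩⟩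
  loopless := by
    constructor; rintro (v | e) h
    · exact h
    · exact h.1 rfl

/-- The total graph `T(G)`: obtained from `G` by inserting a new vertex into each edge,
joining each new vertex to the end vertices of its corresponding edge, and joining by
edges those pairs of new vertices lying on adjacent edges of `G`. -/
def Tgraph {V : Type*} (G : SimpleGraph V) : SimpleGraph (V ⊕ ↥G.edgeSet) where
  Adj x y :=
    match x, y with
    | Sum.inl v, Sum.inl w => G.Adj v w
    | Sum.inl v, Sum.inr e => v ∈ (e : Sym2 V)
    | Sum.inr e, Sum.inl v => v ∈ (e : Sym2 V)
    | Sum.inr e, Sum.inr f => e ≠ f ∧ ∃ v, v ∈ (e : Sym2 V) ∧ v ∈ (f : Sym2 V)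
  symm := by
    constructor; rintro (v | e) (w | f) h
    · exact G.adj_symm h
    · exact h
    · exact h
    · exact ⟨h.1.symm, by obtain ⟨v, h1, h2⟩ := h.2; exact ⟨v, h2, h1⟩⟩
  loopless := by
    constructor; rintro (v | e) h
    · exact G.irrefl h
    · exact h.1 rfl

/-- The disjoint union of `H` and `K` together with all edges joining a vertex `a` of `H`
with `P a` to every vertex of `K`. -/
def joinOn {A B : Type*} (H : SimpleGraph A) (K : SimpleGraph B) (P : A → Prop) :
    SimpleGraph (A ⊕ B) where
  Adj x y :=
    match x, y with
    | Sum.inl a, Sum.inl a' => H.Adj a a'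
    | Sum.inr b, Sum.inr b' => K.Adj b b'
    | Sum.inl a, Sum.inr _ => P a
    | Sum.inr _, Sum.inl a => P a
  symm := by
    constructor; rintro (a | b) (a' | b') h
    · exact H.adj_symm h
    · exact h
    · exact h
    · exact K.adj_symm h
  loopless := by
    constructor; rintro (a | b) h
    · exact H.irrefl h
    · exact K.irrefl h

/-- The vertex S-join `G₁ ∨̇_S G₂`: obtained from `S(G₁)` and `G₂` by joining each vertex
of `V(G₁)` to every vertex of `G₂`. -/
def vertexSJoin {V₁ V₂ : Type*} (G₁ : SimpleGraph V₁) (G₂ : SimpleGraph V₂) :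
    SimpleGraph ((V₁ ⊕ ↥G₁.edgeSet) ⊕ V₂) :=
  joinOn (Sgraph G₁) G₂ (fun x => x.isLeft)

/-- The edge S-join `G₁ ∨̱_S G₂`: obtained from `S(G₁)` and `G₂` by joining each inserted
vertex (each vertex of `I(G₁)`) to every vertex of `G₂`. -/
def edgeSJoin {V₁ V₂ : Type*} (G₁ : SimpleGraph V₁) (G₂ : SimpleGraph V₂) :
    SimpleGraph ((V₁ ⊕ ↥G₁.edgeSet) ⊕ V₂) :=
  joinOn (Sgraph G₁) G₂ (fun x => x.isRight)

/-- The vertex R-join `G₁ ∨̇_R G₂`. -/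
def vertexRJoin {V₁ V₂ : Type*} (G₁ : SimpleGraph V₁) (G₂ : SimpleGraph V₂) :
    SimpleGraph ((V₁ ⊕ ↥G₁.edgeSet) ⊕ V₂) :=
  joinOn (Rgraph G₁) G₂ (fun x => x.isLeft)

/-- The edge R-join `G₁ ∨̱_R G₂`. -/
def edgeRJoin {V₁ V₂ : Type*} (G₁ : SimpleGraph V₁) (G₂ : SimpleGraph V₂) :
    SimpleGraph ((V₁ ⊕ ↥G₁.edgeSet) ⊕ V₂) :=
  joinOn (Rgraph G₁) G₂ (fun x => x.isRight)

/-- The vertex Q-join `G₁ ∨̇_Q G₂`. -/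
def vertexQJoin {V₁ V₂ : Type*} (G₁ : SimpleGraph V₁) (G₂ : SimpleGraph V₂) :
    SimpleGraph ((V₁ ⊕ ↥G₁.edgeSet) ⊕ V₂) :=
  joinOn (Qgraph G₁) G₂ (fun x => x.isLeft)

/-- The edge Q-join `G₁ ∨̱_Q G₂`. -/
def edgeQJoin {V₁ V₂ : Type*} (G₁ : SimpleGraph V₁) (G₂ : SimpleGraph V₂) :
    SimpleGraph ((V₁ ⊕ ↥G₁.edgeSet) ⊕ V₂) :=
  joinOn (Qgraph G₁) G₂ (fun x => x.isRight)

/-- The vertex T-join `G₁ ∨̇_T G₂`. -/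
def vertexTJoin {V₁ V₂ : Type*} (G₁ : SimpleGraph V₁) (G₂ : SimpleGraph V₂) :
    SimpleGraph ((V₁ ⊕ ↥G₁.edgeSet) ⊕ V₂) :=
  joinOn (Tgraph G₁) G₂ (fun x => x.isLeft)

/-- The edge T-join `G₁ ∨̱_T G₂`. -/
def edgeTJoin {V₁ V₂ : Type*} (G₁ : SimpleGraph V₁) (G₂ : SimpleGraph V₂) :
    SimpleGraph ((V₁ ⊕ ↥G₁.edgeSet) ⊕ V₂) :=
  joinOn (Tgraph G₁) G₂ (fun x => x.isRight)

/-- Degree of a vertex in a graph on a finite vertex type. -/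
noncomputable def gdeg {V : Type*} [Finite V] (G : SimpleGraph V) (v : V) : ℕ :=
  haveI : Fintype ↥(G.neighborSet v) := Fintype.ofFinite _
  G.degree v

/-- The forgotten topological index (F-index): `F(G) = ∑_{v ∈ V(G)} d_G(v)³`. -/
noncomputable def Findex {V : Type*} [Finite V] (G : SimpleGraph V) : ℕ :=
  haveI := Fintype.ofFinite V
  ∑ v : V, gdeg G v ^ 3

/-- The first Zagreb index: `M₁(G) = ∑_{v ∈ V(G)} d_G(v)²`. -/
noncomputable def M1 {V : Type*} [Finite V] (G : SimpleGraph V) : ℕ :=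
  haveI := Fintype.ofFinite V
  ∑ v : V, gdeg G v ^ 2

/-- `M₄(G) = ∑_{v ∈ V(G)} d_G(v)⁴`. -/
noncomputable def M4 {V : Type*} [Finite V] (G : SimpleGraph V) : ℕ :=
  haveI := Fintype.ofFinite V
  ∑ v : V, gdeg G v ^ 4

/-- The hyper Zagreb index: `HM(G) = ∑_{uv ∈ E(G)} (d_G(u) + d_G(v))²`. -/
noncomputable def HM {V : Type*} [Finite V] (G : SimpleGraph V) : ℕ :=
  haveI : Fintype ↥G.edgeSet := Fintype.ofFinite _
  ∑ e : ↥G.edgeSet,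
    Sym2.lift ⟨fun u v => (gdeg G u + gdeg G v) ^ 2,
      fun u v => by dsimp only; rw [add_comm]⟩ (e : Sym2 V)

/-- The redefined Zagreb index:
`ReZM(G) = ∑_{uv ∈ E(G)} d_G(u) d_G(v) (d_G(u) + d_G(v))`. -/
noncomputable def ReZM {V : Type*} [Finite V] (G : SimpleGraph V) : ℕ :=
  haveI : Fintype ↥G.edgeSet := Fintype.ofFinite _
  ∑ e : ↥G.edgeSet,
    Sym2.lift ⟨fun u v => gdeg G u * gdeg G v * (gdeg G u + gdeg G v),
      fun u v => by dsimp only; ring⟩ (e : Sym2 V)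

/-- The number of edges of `G`. -/
noncomputable def numEdges {V : Type*} (G : SimpleGraph V) : ℕ :=
  Nat.card ↥G.edgeSet

/-! In `G₁ ∨̱_T G₂` a vertex `v` of `G₁` has degree `2 d(v)` (its neighbours and its incident
edges), the inserted vertex of an edge `uv` has degree `d(u) + d(v) + n₂` (`u`, `v`, the
`d(u) + d(v) - 2` other edges meeting `uv`, and all of `G₂`), and a vertex `w` of `G₂` has degree
`d(w) + m₁`. Cube and sum: on edges, `(d(u) + d(v) + n₂)³` splits into
`d(u)³ + d(v)³ + 3 d(u) d(v) (d(u) + d(v)) + 3 n₂ (d(u) + d(v))² + 3 n₂² (d(u) + d(v)) + n₂³`,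
and the double count `∑_{uv ∈ E} (f(u) + f(v)) = ∑_v d(v) f(v)` turns the first and fourth
terms into `M₄(G₁)` and `M₁(G₁)`; on `G₂` the handshake lemma `∑_w d(w) = 2 m₂` finishes. -/

open SimpleGraph

theorem Set.ncard_image_inl_union_image_inr {α β : Type*} (s : Set α) (t : Set β)
    (hs : s.Finite := by toFinite_tac) (ht : t.Finite := by toFinite_tac) :
    (Sum.inl '' s ∪ Sum.inr '' t : Set (α ⊕ β)).ncard = s.ncard + t.ncard := by
  rw [Set.ncard_union_eq Set.disjoint_image_inl_image_inr (hs.image _) (ht.image _),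
    Set.ncard_image_of_injective _ Sum.inl_injective,
    Set.ncard_image_of_injective _ Sum.inr_injective]

section Degree

variable {V : Type*} [Finite V] (G : SimpleGraph V)

theorem gdeg_eq_ncard (v : V) : gdeg G v = (G.neighborSet v).ncard := by
  let : Fintype (G.neighborSet v) := Fintype.ofFinite _
  rw [← Nat.card_coe_set_eq, Nat.card_eq_fintype_card, card_neighborSet_eq_degree]
  rfl

theorem ncard_setOf_mem_edge (v : V) : {e : G.edgeSet | v ∈ (e : Sym2 V)}.ncard = gdeg G v := by
  classical
  rw [gdeg_eq_ncard, ← Nat.card_coe_set_eq, ← Nat.card_coe_set_eq,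
    ← Nat.card_congr (G.incidenceSetEquivNeighborSet v)]
  exact Nat.card_congr (Equiv.subtypeSubtypeEquivSubtypeInter (· ∈ G.edgeSet) (v ∈ ·))

end Degree

section Join

variable {A B : Type*} [Finite A] [Finite B] (H : SimpleGraph A) (K : SimpleGraph B)
  (P : A → Prop)

open Classical in
theorem gdeg_joinOn_inl (a : A) :
    gdeg (joinOn H K P) (Sum.inl a) = gdeg H a + if P a then Nat.card B else 0 := by
  have hN : (joinOn H K P).neighborSet (Sum.inl a) =
      Sum.inl '' H.neighborSet a ∪ Sum.inr '' {_b | P a} := by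
    ext (a' | b) <;> simp [joinOn, neighborSet]
  rw [gdeg_eq_ncard, hN, Set.ncard_image_inl_union_image_inr, ← gdeg_eq_ncard]
  split_ifs with ha <;> simp [ha]

theorem gdeg_joinOn_inr (b : B) :
    gdeg (joinOn H K P) (Sum.inr b) = gdeg K b + {a | P a}.ncard := by
  have hN : (joinOn H K P).neighborSet (Sum.inr b) =
      Sum.inl '' {a | P a} ∪ Sum.inr '' K.neighborSet b := by
    ext (a | b') <;> simp [joinOn, neighborSet]
  rw [gdeg_eq_ncard, hN, Set.ncard_image_inl_union_image_inr, ← gdeg_eq_ncard, add_comm]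

end Join

section Total

variable {V : Type*} [Finite V] (G : SimpleGraph V)

theorem gdeg_Tgraph_inl (v : V) : gdeg (Tgraph G) (Sum.inl v) = 2 * gdeg G v := by
  have hN : (Tgraph G).neighborSet (Sum.inl v) =
      Sum.inl '' G.neighborSet v ∪ Sum.inr '' {e : G.edgeSet | v ∈ (e : Sym2 V)} := by
    ext (w | e) <;> simp [Tgraph, neighborSet]
  rw [gdeg_eq_ncard, hN, Set.ncard_image_inl_union_image_inr, ncard_setOf_mem_edge,
    ← gdeg_eq_ncard, two_mul]

/-- The edges meeting `e = uv` other than `e` itself are those through `u` and those through `v`,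
and `e` is the only edge through both. -/
theorem ncard_edges_meeting_add_two {e : G.edgeSet} {u v : V} (huv : G.Adj u v)
    (he : (e : Sym2 V) = s(u, v)) :
    {f : G.edgeSet | e ≠ f ∧ ∃ w, w ∈ (e : Sym2 V) ∧ w ∈ (f : Sym2 V)}.ncard + 2 =
      gdeg G u + gdeg G v := by
  set Eu := {f : G.edgeSet | u ∈ (f : Sym2 V)}
  set Ev := {f : G.edgeSet | v ∈ (f : Sym2 V)}
  have hmeet : {f : G.edgeSet | e ≠ f ∧ ∃ w, w ∈ (e : Sym2 V) ∧ w ∈ (f : Sym2 V)} =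
      (Eu ∪ Ev) \ {e} := by
    ext f
    simp [Eu, Ev, he, eq_comm (a := e), and_comm]
  have hinter : Eu ∩ Ev = {e} := by
    ext f
    simp only [Set.mem_inter_iff, Set.mem_ofPred_eq, Set.mem_singleton_iff, Eu, Ev,
      Sym2.mem_and_mem_iff huv.ne, ← he, Subtype.ext_iff]
  have hunion := Set.ncard_union_add_ncard_inter Eu Ev
  rw [hinter, Set.ncard_singleton, ncard_setOf_mem_edge, ncard_setOf_mem_edge] at hunion
  have he_mem : e ∈ Eu ∪ Ev := Or.inl (by simp [Eu, he])
  rw [hmeet, ← hunion, ← Set.ncard_sdiff_singleton_add_one he_mem]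

theorem gdeg_Tgraph_inr {e : G.edgeSet} {u v : V} (huv : G.Adj u v)
    (he : (e : Sym2 V) = s(u, v)) :
    gdeg (Tgraph G) (Sum.inr e) = gdeg G u + gdeg G v := by
  have hN : (Tgraph G).neighborSet (Sum.inr e) = Sum.inl '' {u, v} ∪
      Sum.inr '' {f : G.edgeSet | e ≠ f ∧ ∃ w, w ∈ (e : Sym2 V) ∧ w ∈ (f : Sym2 V)} := by
    ext (w | f)
    · simp [Tgraph, neighborSet, he]
    · simp [Tgraph, neighborSet]
  rw [gdeg_eq_ncard, hN, Set.ncard_image_inl_union_image_inr, Set.ncard_pair huv.ne, add_comm,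
    ncard_edges_meeting_add_two G huv he]

end Total

section EdgeTJoin

variable {V₁ V₂ : Type*} [Finite V₁] [Finite V₂] (G₁ : SimpleGraph V₁) (G₂ : SimpleGraph V₂)

theorem gdeg_edgeTJoin_inl_inl (v : V₁) :
    gdeg (edgeTJoin G₁ G₂) (Sum.inl (Sum.inl v)) = 2 * gdeg G₁ v := by
  simp [edgeTJoin, gdeg_joinOn_inl, gdeg_Tgraph_inl]

theorem gdeg_edgeTJoin_inl_inr {e : G₁.edgeSet} {u v : V₁} (huv : G₁.Adj u v)
    (he : (e : Sym2 V₁) = s(u, v)) :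
    gdeg (edgeTJoin G₁ G₂) (Sum.inl (Sum.inr e)) = gdeg G₁ u + gdeg G₁ v + Nat.card V₂ := by
  simp [edgeTJoin, gdeg_joinOn_inl, gdeg_Tgraph_inr G₁ huv he]

theorem gdeg_edgeTJoin_inr (w : V₂) :
    gdeg (edgeTJoin G₁ G₂) (Sum.inr w) = gdeg G₂ w + numEdges G₁ := by
  have hI : {x : V₁ ⊕ G₁.edgeSet | x.isRight} = Set.range Sum.inr := by
    ext (v | e) <;> simp
  rw [edgeTJoin, gdeg_joinOn_inr, hI, Set.ncard_range_of_injective Sum.inr_injective, numEdges]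

end EdgeTJoin

section Sums

variable {V : Type*} [Fintype V] (G : SimpleGraph V)

theorem Findex_eq_sum : Findex G = ∑ v, gdeg G v ^ 3 := by
  rw [Findex, Subsingleton.elim (Fintype.ofFinite V) ‹_›]

theorem M1_eq_sum : M1 G = ∑ v, gdeg G v ^ 2 := by
  rw [M1, Subsingleton.elim (Fintype.ofFinite V) ‹_›]

theorem M4_eq_sum : M4 G = ∑ v, gdeg G v ^ 4 := by
  rw [M4, Subsingleton.elim (Fintype.ofFinite V) ‹_›]

theorem HM_eq_sum [Fintype G.edgeSet] : HM G = ∑ e : G.edgeSet,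
    Sym2.lift ⟨fun u v => (gdeg G u + gdeg G v) ^ 2, fun u v => by ring⟩ (e : Sym2 V) := by
  rw [HM, Subsingleton.elim (Fintype.ofFinite G.edgeSet) ‹_›]

theorem ReZM_eq_sum [Fintype G.edgeSet] : ReZM G = ∑ e : G.edgeSet,
    Sym2.lift ⟨fun u v => gdeg G u * gdeg G v * (gdeg G u + gdeg G v), fun u v => by ring⟩
      (e : Sym2 V) := by
  rw [ReZM, Subsingleton.elim (Fintype.ofFinite G.edgeSet) ‹_›]

theorem sum_edgeSet_lift_add [Fintype G.edgeSet] (g : V → ℕ) :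
    ∑ e : G.edgeSet, Sym2.lift ⟨fun u v => g u + g v, fun _ _ => add_comm _ _⟩ (e : Sym2 V) =
      ∑ v, gdeg G v * g v := by
  classical
  calc _ = ∑ e : G.edgeSet, ∑ v, if v ∈ (e : Sym2 V) then g v else 0 := by
        refine Fintype.sum_congr _ _ fun ⟨e, he⟩ => ?_
        induction e using Sym2.ind with | h u w => ?_
        have hends : Finset.univ.filter (· ∈ s(u, w)) = {u, w} := by
          ext x; simp [Sym2.mem_iff]
        rw [← Finset.sum_filter, hends, Finset.sum_pair (G.mem_edgeSet.1 he).ne, Sym2.lift_mk]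
    _ = ∑ v, ∑ e : G.edgeSet, if v ∈ (e : Sym2 V) then g v else 0 := Finset.sum_comm
    _ = ∑ v, gdeg G v * g v := by
        refine Fintype.sum_congr _ _ fun v => ?_
        rw [← Finset.sum_filter, Finset.sum_const, smul_eq_mul, ← ncard_setOf_mem_edge,
          Set.ncard_eq_toFinset_card', Set.toFinset_ofPred]

theorem sum_gdeg_eq_two_mul_numEdges : ∑ v, gdeg G v = 2 * numEdges G := by
  have := Fintype.ofFinite G.edgeSet
  have hlift : ∀ e : G.edgeSet,
      Sym2.lift ⟨fun _ _ => 1 + 1, fun _ _ => rfl⟩ (e : Sym2 V) = 2 := by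
    rintro ⟨e, -⟩
    induction e using Sym2.ind with | h u w => rfl
  have h := sum_edgeSet_lift_add G fun _ => 1
  simp only [hlift, mul_one, Finset.sum_const, Finset.card_univ, smul_eq_mul] at h
  rw [← h, numEdges, Nat.card_eq_fintype_card, mul_comm]

end Sums

section EdgeTJoinSums

variable {V₁ V₂ : Type*} [Fintype V₁] [Fintype V₂] (G₁ : SimpleGraph V₁) (G₂ : SimpleGraph V₂)

theorem sum_gdeg_edgeTJoin_inl_inl_pow_three :
    ∑ v : V₁, gdeg (edgeTJoin G₁ G₂) (Sum.inl (Sum.inl v)) ^ 3 = 8 * Findex G₁ := by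
  simp only [gdeg_edgeTJoin_inl_inl, Findex_eq_sum, Finset.mul_sum, mul_pow]
  norm_num

theorem sum_gdeg_edgeTJoin_inr_pow_three :
    ∑ w : V₂, gdeg (edgeTJoin G₁ G₂) (Sum.inr w) ^ 3 =
      Findex G₂ + 3 * numEdges G₁ * M1 G₂ + 6 * numEdges G₁ ^ 2 * numEdges G₂
        + Nat.card V₂ * numEdges G₁ ^ 3 := by
  have hexp : ∀ w, gdeg (edgeTJoin G₁ G₂) (Sum.inr w) ^ 3 =
      gdeg G₂ w ^ 3 + 3 * numEdges G₁ * gdeg G₂ w ^ 2 + 3 * numEdges G₁ ^ 2 * gdeg G₂ w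
        + numEdges G₁ ^ 3 := fun w => by
    rw [gdeg_edgeTJoin_inr]; ring
  simp only [hexp, Finset.sum_add_distrib, ← Finset.mul_sum, ← Findex_eq_sum, ← M1_eq_sum,
    sum_gdeg_eq_two_mul_numEdges, Finset.sum_const, Finset.card_univ, smul_eq_mul,
    Nat.card_eq_fintype_card]
  ring

theorem sum_gdeg_edgeTJoin_inl_inr_pow_three [Fintype G₁.edgeSet] :
    ∑ e : G₁.edgeSet, gdeg (edgeTJoin G₁ G₂) (Sum.inl (Sum.inr e)) ^ 3 =
      M4 G₁ + 3 * ReZM G₁ + 3 * Nat.card V₂ * HM G₁ + 3 * Nat.card V₂ ^ 2 * M1 G₁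
        + numEdges G₁ * Nat.card V₂ ^ 3 := by
  have hexp : ∀ e : G₁.edgeSet, gdeg (edgeTJoin G₁ G₂) (Sum.inl (Sum.inr e)) ^ 3 =
      Sym2.lift ⟨fun u v => gdeg G₁ u ^ 3 + gdeg G₁ v ^ 3, fun _ _ => add_comm _ _⟩ (e : Sym2 V₁)
        + 3 * Sym2.lift ⟨fun u v => gdeg G₁ u * gdeg G₁ v * (gdeg G₁ u + gdeg G₁ v),
            fun u v => by ring⟩ (e : Sym2 V₁)
        + 3 * Nat.card V₂ * Sym2.lift ⟨fun u v => (gdeg G₁ u + gdeg G₁ v) ^ 2,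
            fun u v => by ring⟩ (e : Sym2 V₁)
        + 3 * Nat.card V₂ ^ 2 * Sym2.lift ⟨fun u v => gdeg G₁ u + gdeg G₁ v,
            fun _ _ => add_comm _ _⟩ (e : Sym2 V₁)
        + Nat.card V₂ ^ 3 := by
    rintro ⟨e, he⟩
    induction e using Sym2.ind with | h u v => ?_
    rw [gdeg_edgeTJoin_inl_inr G₁ G₂ (G₁.mem_edgeSet.1 he) rfl]
    simp only [Sym2.lift_mk]
    ring
  have hM4 : ∑ v, gdeg G₁ v * gdeg G₁ v ^ 3 = M4 G₁ := by
    simp only [M4_eq_sum, ← pow_succ']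
  have hM1 : ∑ v, gdeg G₁ v * gdeg G₁ v = M1 G₁ := by
    simp only [M1_eq_sum, sq]
  simp only [hexp, Finset.sum_add_distrib, ← Finset.mul_sum, sum_edgeSet_lift_add, hM4, hM1,
    ← HM_eq_sum, ← ReZM_eq_sum, Finset.sum_const, Finset.card_univ, smul_eq_mul, numEdges,
    Nat.card_eq_fintype_card]

end EdgeTJoinSums

theorem Findex_edgeTJoin_general {V₁ V₂ : Type*} [Finite V₁] [Finite V₂]
    (G₁ : SimpleGraph V₁) (G₂ : SimpleGraph V₂)
    (n₂ m₁ m₂ : ℕ)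
    (hn₂ : n₂ = Nat.card V₂)
    (hm₁ : m₁ = numEdges G₁) (hm₂ : m₂ = numEdges G₂) :
    (Findex (edgeTJoin G₁ G₂) : ℤ) =
      8 * (Findex G₁ : ℤ) + (Findex G₂ : ℤ) + 3 * (n₂ : ℤ) ^ 2 * (M1 G₁ : ℤ) + 3 * (m₁ : ℤ) * (M1 G₂ : ℤ)
        + (M4 G₁ : ℤ) + 3 * (n₂ : ℤ) * (HM G₁ : ℤ) + 3 * (ReZM G₁ : ℤ)
        + (m₁ : ℤ) ^ 2 * (6 * (m₂ : ℤ) + (m₁ : ℤ) * (n₂ : ℤ)) + (m₁ : ℤ) * (n₂ : ℤ) ^ 3 := by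
  have := Fintype.ofFinite V₁
  have := Fintype.ofFinite V₂
  have := Fintype.ofFinite G₁.edgeSet
  rw [Findex_eq_sum, Fintype.sum_sum_type, Fintype.sum_sum_type,
    sum_gdeg_edgeTJoin_inl_inl_pow_three, sum_gdeg_edgeTJoin_inl_inr_pow_three,
    sum_gdeg_edgeTJoin_inr_pow_three, hn₂, hm₁, hm₂]
  push_cast
  ring

theorem Findex_edgeTJoin {V₁ V₂ : Type*} [Finite V₁] [Finite V₂]
    (G₁ : SimpleGraph V₁) (G₂ : SimpleGraph V₂)
    (hc₁ : G₁.Connected) (hc₂ : G₂.Connected)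
    (n₂ m₁ m₂ : ℕ)
    (hn₂ : n₂ = Nat.card V₂)
    (hm₁ : m₁ = numEdges G₁) (hm₂ : m₂ = numEdges G₂) :
    (Findex (edgeTJoin G₁ G₂) : ℤ) =
      8 * (Findex G₁ : ℤ) + (Findex G₂ : ℤ) + 3 * (n₂ : ℤ) ^ 2 * (M1 G₁ : ℤ) + 3 * (m₁ : ℤ) * (M1 G₂ : ℤ)
        + (M4 G₁ : ℤ) + 3 * (n₂ : ℤ) * (HM G₁ : ℤ) + 3 * (ReZM G₁ : ℤ)
        + (m₁ : ℤ) ^ 2 * (6 * (m₂ : ℤ) + (m₁ : ℤ) * (n₂ : ℤ)) + (m₁ : ℤ) * (n₂ : ℤ) ^ 3 :=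
  Findex_edgeTJoin_general G₁ G₂ n₂ m₁ m₂ hn₂ hm₁ hm₂
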